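/- arXiv:1601.04054 — 3 statements merged into one kernel-verified Lean document; each statement's English description precedes it below -/
import Mathlib

section
/- Let v₁,…,vₙ ∈ ℝᵐ and suppose the vertices are ordered so that for each i, the vector vᵢ has positive i-th coordinate and its support is contained in coordinates j ≤ i (i.e., vᵢ is 'lower triangular with positive diagonal' and nonnegative entries). Then for any x ∈ ℝᵐ there exists a subset J ⊆ {j : xⱼ < 0} and positive reals aⱼ for j ∈ J such that y := x + Σ_{j∈J} aⱼ vⱼ has all coordinates nonnegative and yⱼ = 0 for all j ∈ J. -/
theorem aux_correction (n : ℕ) : ∀ (v : Fin n → Fin n → ℝ), (∀ i, 0 < v i i) →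
    (∀ i j, 0 ≤ v i j) → (∀ i j : Fin n, i < j → v i j = 0) → ∀ x : Fin n → ℝ,
    ∃ (J : Finset (Fin n)) (a : Fin n → ℝ),
      (∀ j ∈ J, x j < 0) ∧ (∀ j ∈ J, 0 < a j) ∧
      (∀ i, 0 ≤ x i + ∑ j ∈ J, a j * v j i) ∧
      (∀ j ∈ J, x j + ∑ j' ∈ J, a j' * v j' j = 0) := by
  induction n with
  | zero =>
    intro v _ _ _ x
    exact ⟨∅, 0, fun j hj => j.elim0, fun j hj => j.elim0, fun i => i.elim0,
      fun j hj => j.elim0⟩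
  | succ n ih =>
    intro v hdiag hnonneg hsupp x
    set L := Fin.last n with hL
    set a₀ : ℝ := if x L < 0 then -x L / v L L else 0 with ha₀
    have ha₀nonneg : 0 ≤ a₀ := by
      rw [ha₀]; split
      next h => exact le_of_lt (div_pos (neg_pos.mpr h) (hdiag L))
      next => exact le_refl 0
    set x' : Fin (n+1) → ℝ := fun i => x i + a₀ * v L i with hx'
    have hxle : ∀ i, x i ≤ x' i := fun i =>
      le_add_of_nonneg_right (mul_nonneg ha₀nonneg (hnonneg L i))
    have hx'L0 : x L < 0 → x' L = 0 := by
      intro h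
      simp only [hx', ha₀, if_pos h, div_mul_cancel₀ _ (hdiag L).ne']
      ring
    have hx'Lnn : 0 ≤ x' L := by
      by_cases h : x L < 0
      · exact (hx'L0 h).ge
      · simp only [hx']
        have := mul_nonneg ha₀nonneg (hnonneg L L)
        linarith [not_lt.mp h]
    obtain ⟨J', a', h1, h2, h3, h4⟩ := ih (fun i j => v i.castSucc j.castSucc)
      (fun i => hdiag _) (fun i j => hnonneg _ _)
      (fun i j hij => hsupp _ _ (by simpa using hij))
      (fun k => x' k.castSucc)
    set a : Fin (n+1) → ℝ := Fin.lastCases a₀ a' with ha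
    have haL : a L = a₀ := by rw [ha]; exact Fin.lastCases_last
    have haC : ∀ k : Fin n, a k.castSucc = a' k := fun k => by rw [ha]; exact Fin.lastCases_castSucc ..
    set J : Finset (Fin (n+1)) := J'.image Fin.castSucc ∪ (if x L < 0 then {L} else ∅)
      with hJ
    have hmem : ∀ j, j ∈ J ↔ (∃ k ∈ J', Fin.castSucc k = j) ∨ (x L < 0 ∧ j = L) := by
      intro j
      rw [hJ, Finset.mem_union, Finset.mem_image]
      constructor
      · rintro (h | h)
        · exact Or.inl h
        · by_cases hx : x L < 0
          · rw [if_pos hx, Finset.mem_singleton] at h; exact Or.inr ⟨hx, h⟩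
          · rw [if_neg hx] at h; exact absurd h (Finset.notMem_empty j)
      · rintro (h | ⟨hx, rfl⟩)
        · exact Or.inl h
        · right; rw [if_pos hx]; exact Finset.mem_singleton_self L
    have hdisj : Disjoint (J'.image Fin.castSucc) (if x L < 0 then {L} else ∅) := by
      refine Finset.disjoint_left.mpr ?_
      rintro j hj hj'
      obtain ⟨k, _, rfl⟩ := Finset.mem_image.mp hj
      by_cases hx : x L < 0
      · rw [if_pos hx, Finset.mem_singleton] at hj'
        exact absurd hj' (Fin.castSucc_lt_last k).ne
      · rw [if_neg hx] at hj'; exact absurd hj' (Finset.notMem_empty _)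
    have hsum : ∀ i, ∑ j ∈ J, a j * v j i
        = (∑ k ∈ J', a' k * v k.castSucc i) + a₀ * v L i := by
      intro i
      rw [hJ, Finset.sum_union hdisj,
        Finset.sum_image (fun k _ k' _ h => Fin.castSucc_injective n h)]
      congr 1
      · exact Finset.sum_congr rfl fun k _ => by rw [haC]
      · by_cases hx : x L < 0
        · rw [if_pos hx, Finset.sum_singleton, haL]
        · rw [if_neg hx, Finset.sum_empty, ha₀, if_neg hx, zero_mul]
    have hsumL : ∀ j : Fin (n+1), x j + ∑ j' ∈ J, a j' * v j' j = x' j +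
        ∑ k ∈ J', a' k * v k.castSucc j := by
      intro j; rw [hsum]; simp only [hx']; ring
    refine ⟨J, a, ?_, ?_, ?_, ?_⟩
    · intro j hj
      rcases (hmem j).mp hj with ⟨k, hk, rfl⟩ | ⟨hx, rfl⟩
      · exact lt_of_le_of_lt (hxle _) (h1 k hk)
      · exact hx
    · intro j hj
      rcases (hmem j).mp hj with ⟨k, hk, rfl⟩ | ⟨hx, rfl⟩
      · rw [haC]; exact h2 k hk
      · rw [haL, ha₀, if_pos hx]
        exact div_pos (neg_pos.mpr hx) (hdiag L)
    · intro i
      rw [hsumL]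
      induction i using Fin.lastCases with
      | last =>
        have hz : ∀ k ∈ J', a' k * v (Fin.castSucc k) L = 0 := fun k _ => by
          rw [hsupp _ _ (Fin.castSucc_lt_last k), mul_zero]
        rw [Finset.sum_congr rfl hz, Finset.sum_const_zero, add_zero]
        exact hx'Lnn
      | cast k => exact h3 k
    · intro j hj
      rw [hsumL]
      rcases (hmem j).mp hj with ⟨k, hk, rfl⟩ | ⟨hx, rfl⟩
      · exact h4 k hk
      · have hz : ∀ k ∈ J', a' k * v (Fin.castSucc k) L = 0 := fun k _ => by
          rw [hsupp _ _ (Fin.castSucc_lt_last k), mul_zero]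
        rw [Finset.sum_congr rfl hz, Finset.sum_const_zero, add_zero]
        exact hx'L0 hx

/-- Given vectors `v 1, …, v n` in `ℝⁿ` which are "lower triangular with positive
diagonal" and have nonnegative entries (like the dimension vectors of the projective
modules `P i`), for any `x ∈ ℝⁿ` there exist `J ⊆ {j : x j < 0}` and positive reals
`a j` (`j ∈ J`) such that `y := x + ∑_{j ∈ J} a j • v j` has nonnegative coordinates
and `y j = 0` for all `j ∈ J`. -/
theorem exists_correction_by_projectives (n : ℕ) (v : Fin n → Fin n → ℝ)
    (hdiag : ∀ i, 0 < v i i) (hnonneg : ∀ i j, 0 ≤ v i j)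
    (hsupp : ∀ i j : Fin n, i < j → v i j = 0)
    (x : Fin n → ℝ) :
    ∃ (J : Finset (Fin n)) (a : Fin n → ℝ),
      (∀ j ∈ J, x j < 0) ∧ (∀ j ∈ J, 0 < a j) ∧
      (∀ i, 0 ≤ x i + ∑ j ∈ J, a j * v j i) ∧
      (∀ j ∈ J, x j + ∑ j' ∈ J, a j' * v j' j = 0) :=
  aux_correction n v hdiag hnonneg hsupp x
end

section
/- For real numbers x, y, define x' = max(0, x) and y' = max(0, y, 2x + y). Then the pair (x', y') obtained from the C₂ mutation sequence (j,k) agrees with the pair obtained from the sequence (k,j,k,j); concretely, composing the four successive piecewise-linear maps corresponding to the mutation sequence (k,j,k,j) applied to (x,y) yields the same result (max(0,x), max(0, y, 2x+y)). Verify this identity by checking all sign cases of x, y, x+y, x+2y. -/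
open Matrix

/-! A row of a mutated matrix depends only on that row and on the pivot row, so the row
`(r₀, r₁, r₂)` of `p` never influences the others and may be replaced by `0`. Along both green
sequences every entry outside the `p`-column is then a constant, while the `p`-column changes by
the tropical rule `b_ip ↦ b_ip + [b_il]₊ [b_lp]₊ - [-b_il]₊ [-b_lp]₊`. The two resulting
piecewise-linear expressions in `(x, y)` agree by a check of sign cases. -/

/-- Fomin–Zelevinsky mutation of a `6 × 3` real extended exchange matrix (rows `0,1,2`
form the exchange part `B`, rows `3,4,5` form the coefficient part `C`) in the
direction of column `l`. -/
noncomputable def extMutation (M : Matrix (Fin 6) (Fin 3) ℝ) (l : Fin 3) : Matrix (Fin 6) (Fin 3) ℝ :=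
  fun i j =>
    if i.val = l.val ∨ j = l then -M i j
    else if 0 < M i l * M (Fin.castLE (by omega) l) j then
      M i j + M i l * |M (Fin.castLE (by omega) l) j|
    else M i j

theorem ite_pos_mul_add_mul_abs {m a b : ℝ} :
    (if 0 < a * b then m + a * |b| else m) = m + max 0 a * max 0 b - max 0 (-a) * max 0 (-b) := by
  rcases le_total 0 a with ha | ha <;> rcases le_total 0 b with hb | hb <;>
    simp only [max_eq_left, max_eq_right, abs_of_nonneg, abs_of_nonpos, neg_nonneg, neg_nonpos, ha, hb] <;>
    split_ifs <;> nlinarith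

theorem extMutation_apply (M : Matrix (Fin 6) (Fin 3) ℝ) (l : Fin 3) (i : Fin 6) (j : Fin 3) :
    extMutation M l i j = if i.val = l.val ∨ j = l then -M i j else
      M i j + max 0 (M i l) * max 0 (M (Fin.castLE (by omega) l) j)
        - max 0 (-M i l) * max 0 (-M (Fin.castLE (by omega) l) j) := by
  rw [extMutation, ite_pos_mul_add_mul_abs]

theorem Set.EqOn.extMutation {M N : Matrix (Fin 6) (Fin 3) ℝ} {S : Set (Fin 6)} {l : Fin 3}
    (h : Set.EqOn M N S) (hl : Fin.castLE (by omega) l ∈ S) :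
    Set.EqOn (extMutation M l) (extMutation N l) S := by
  intro i hi
  ext j
  simp only [_root_.extMutation, h hi, h hl]

theorem extMutation_j_seed (s t a b c : ℝ) :
    extMutation !![0, -1, s; 2, 0, t; 0, 0, 0; 1, 0, a; 0, 1, b; 0, 0, c] 0 =
      !![0, 1, -s; -2, 0, t + 2 * max 0 s; 0, 0, 0; -1, 0, a + max 0 s; 0, 1, b; 0, 0, c] := by
  ext i j
  fin_cases i <;> fin_cases j <;> norm_num [extMutation_apply, Fin.castLE]

theorem extMutation_k_after_j (s t a b c : ℝ) :
    extMutation !![0, 1, s; -2, 0, t; 0, 0, 0; -1, 0, a; 0, 1, b; 0, 0, c] 1 =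
      !![0, -1, s + max 0 t; 2, 0, -t; 0, 0, 0; -1, 0, a; 0, -1, b + max 0 t; 0, 0, c] := by
  ext i j
  fin_cases i <;> fin_cases j <;> norm_num [extMutation_apply, Fin.castLE]

theorem extMutation_k_seed (s t a b c : ℝ) :
    extMutation !![0, -1, s; 2, 0, t; 0, 0, 0; 1, 0, a; 0, 1, b; 0, 0, c] 1 =
      !![0, 1, s - max 0 (-t); -2, 0, -t; 0, 0, 0; 1, 0, a; 2, -1, b + max 0 t; 0, 0, c] := by
  ext i j
  fin_cases i <;> fin_cases j <;> norm_num [extMutation_apply, Fin.castLE]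

theorem extMutation_j_after_k (s t a b c : ℝ) :
    extMutation !![0, 1, s; -2, 0, t; 0, 0, 0; 1, 0, a; 2, -1, b; 0, 0, c] 0 =
      !![0, -1, -s; 2, 0, t - 2 * max 0 (-s); 0, 0, 0; -1, 1, a + max 0 s; -2, 1, b + 2 * max 0 s;
        0, 0, c] := by
  ext i j
  fin_cases i <;> fin_cases j <;> norm_num [extMutation_apply, Fin.castLE]

theorem extMutation_k_after_kj (s t a b c : ℝ) :
    extMutation !![0, -1, s; 2, 0, t; 0, 0, 0; -1, 1, a; -2, 1, b; 0, 0, c] 1 =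
      !![0, 1, s - max 0 (-t); -2, 0, -t; 0, 0, 0; 1, -1, a + max 0 t; 0, -1, b + max 0 t;
        0, 0, c] := by
  ext i j
  fin_cases i <;> fin_cases j <;> norm_num [extMutation_apply, Fin.castLE]

theorem extMutation_j_after_kjk (s t a b c : ℝ) :
    extMutation !![0, 1, s; -2, 0, t; 0, 0, 0; 1, -1, a; 0, -1, b; 0, 0, c] 0 =
      !![0, -1, -s; 2, 0, t - 2 * max 0 (-s); 0, 0, 0; -1, 0, a + max 0 s; 0, -1, b; 0, 0, c] := by
  ext i j
  fin_cases i <;> fin_cases j <;> norm_num [extMutation_apply, Fin.castLE]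

-- `c₀, c₁, c₂`: the `p`-entries of rows `j`, `k`, `j` after steps 1, 2, 3 of `(k, j, k, j)`.
theorem c2_tropical_hexagon {x y c₀ c₁ c₂ : ℝ} (h₀ : c₀ = x - max 0 (-y))
    (h₁ : c₁ = -y - 2 * max 0 (-c₀)) (h₂ : c₂ = -c₀ - max 0 (-c₁)) :
    -x + max 0 (y + 2 * max 0 x) = -c₂ ∧
      -(y + 2 * max 0 x) = -c₁ - 2 * max 0 (-c₂) ∧
      max 0 x = max 0 c₀ + max 0 c₁ + max 0 c₂ ∧
      max 0 (y + 2 * max 0 x) = max 0 y + 2 * max 0 c₀ + max 0 c₁ := by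
  subst h₀ h₁ h₂
  refine ⟨?_, ?_, ?_, ?_⟩ <;> simp only [max_def] <;> split_ifs <;> linarith

theorem extMutation_jk_seed (x y : ℝ) :
    extMutation (extMutation !![0, -1, x; 2, 0, y; 0, 0, 0; 1, 0, 0; 0, 1, 0; 0, 0, 1] 0) 1 =
      !![0, -1, -x + max 0 (y + 2 * max 0 x); 2, 0, -(y + 2 * max 0 x); 0, 0, 0;
        -1, 0, max 0 x; 0, -1, max 0 (y + 2 * max 0 x); 0, 0, 1] := by
  rw [extMutation_j_seed, extMutation_k_after_j]
  simp only [zero_add]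

theorem extMutation_kjkj_seed_eq_jk (x y : ℝ) :
    extMutation (extMutation (extMutation (extMutation
        !![0, -1, x; 2, 0, y; 0, 0, 0; 1, 0, 0; 0, 1, 0; 0, 0, 1] 1) 0) 1) 0 =
      extMutation (extMutation !![0, -1, x; 2, 0, y; 0, 0, 0; 1, 0, 0; 0, 1, 0; 0, 0, 1] 0) 1 := by
  obtain ⟨h₁, h₂, h₃, h₄⟩ := c2_tropical_hexagon (x := x) (y := y) rfl rfl rfl
  rw [extMutation_jk_seed, extMutation_k_seed, extMutation_j_after_k, extMutation_k_after_kj,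
    extMutation_j_after_kjk]
  simp only [zero_add]
  rw [← h₂, ← h₁, ← h₃, ← h₄]

/-- The `C₂` polygon identity: with exchange entries `b_{jk} = -1`, `b_{kj} = 2`
(indices `j = 0`, `k = 1`) and a further column `p = 2` with entries `x, y`, starting
with coefficient matrix the identity, the mutation sequence `(j,k)` and the mutation
sequence `(k,j,k,j)` produce the same coefficient matrix, and the `p`-th `c`-column
records the coefficients `x' = max(0,x)`, `y' = max(0, y, 2x + y)`. -/
theorem c2_polygon_identity (x y r₀ r₁ r₂ : ℝ) :
    let M : Matrix (Fin 6) (Fin 3) ℝ :=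
      !![0, -1, x; 2, 0, y; r₀, r₁, r₂; 1, 0, 0; 0, 1, 0; 0, 0, 1]
    let M₂ := extMutation (extMutation M 0) 1
    let M₄ := extMutation (extMutation (extMutation (extMutation M 1) 0) 1) 0
    (∀ i : Fin 3, ∀ q : Fin 3, M₂ ⟨i.val + 3, by omega⟩ q = M₄ ⟨i.val + 3, by omega⟩ q) ∧
      M₂ ⟨3, by omega⟩ 2 = max 0 x ∧
      M₂ ⟨4, by omega⟩ 2 = max 0 (max y (2 * x + y)) ∧
      M₂ ⟨5, by omega⟩ 2 = 1 := by
  intro M M₂ M₄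
  have hM : Set.EqOn M !![0, -1, x; 2, 0, y; 0, 0, 0; 1, 0, 0; 0, 1, 0; 0, 0, 1] {2}ᶜ := by
    intro i hi
    ext j
    fin_cases i <;> fin_cases j <;> simp_all [M]
  have h₀ : Fin.castLE (by omega) (0 : Fin 3) ∈ ({2}ᶜ : Set (Fin 6)) := by decide
  have h₁ : Fin.castLE (by omega) (1 : Fin 3) ∈ ({2}ᶜ : Set (Fin 6)) := by decide
  have hM₂ := (hM.extMutation h₀).extMutation h₁
  have hM₄ := (((hM.extMutation h₁).extMutation h₀).extMutation h₁).extMutation h₀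
  rw [extMutation_jk_seed] at hM₂
  rw [extMutation_kjkj_seed_eq_jk, extMutation_jk_seed] at hM₄
  have hC (n : ℕ) (hn : n + 3 < 6) : (⟨n + 3, hn⟩ : Fin 6) ∈ ({2}ᶜ : Set (Fin 6)) := by
    simp [Fin.ext_iff]
  have hy : y + 2 * max 0 x = max y (2 * x + y) := by
    rw [mul_max_of_nonneg _ _ zero_le_two, ← max_add_add_left, mul_zero, add_zero, add_comm y]
  refine ⟨fun i q => (congrFun (hM₂ (hC _ _)) q).trans (congrFun (hM₄ (hC _ _)) q).symm, ?_, ?_, ?_⟩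
  · simpa using congrFun (hM₂ (hC 0 (by omega))) 2
  · simpa [hy] using congrFun (hM₂ (hC 1 (by omega))) 2
  · simpa using congrFun (hM₂ (hC 2 (by omega))) 2
end

section
/- Suppose P is a poset of vertices of a directed graph G (T ≤ T' iff there is a directed path from T to T'), Λ is the unique maximal element, and ~ is the equivalence relation on finite maximal directed paths generated by replacing one side of a polygon (a finite subgraph closed under a pair of local moves with two directed sides sharing source and sink) by the other. If T has only finitely many successors, every directed path from T extends to one terminating at Λ, and for any two outgoing edges at a vertex above T the alternating mutation paths close up into a polygon, then any two directed paths from T to Λ are equivalent under ~. -/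
/-!
Noetherian induction over the vertices reachable from `T`, which is well founded because that set
is finite and `G` is acyclic. At a vertex `v`, two paths to `Λ` with the same first edge are
equivalent by induction at its target. If their first edges `v → w₁` and `v → w₂` differ, close
them up into a polygon with sides `p = w₁ :: p'` and `q = w₂ :: q'`, and extend the common end of
the sides by a path `e` to `Λ`. Then `w₁ :: p' ++ e` and `w₂ :: q' ++ e` differ by one polygon
move, and the induction hypotheses at `w₁` and `w₂` connect them to the two given paths.
-/

/-- `l` is a directed path in the graph `G` from `a` to `b`. -/
def IsDirPath {V : Type*} (G : V → V → Prop) (a b : V) (l : List V) : Prop :=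
  List.Chain G a l ∧ (a :: l).getLast (List.cons_ne_nil a l) = b

/-- An elementary polygonal deformation of paths starting at `T`: replace one side of a
polygon (based at the vertex `v` reached by the common initial segment `pre`) by the
other side. -/
def ElemPolyDef {V : Type*} (polygon : V → List V → List V → Prop) (T : V)
    (P Q : List V) : Prop :=
  ∃ (pre mid₁ mid₂ post : List V) (v : V),
    P = pre ++ mid₁ ++ post ∧ Q = pre ++ mid₂ ++ post ∧
    (T :: pre).getLast (List.cons_ne_nil T pre) = v ∧ polygon v mid₁ mid₂

open Relation

section

variable {V : Type*} {G : V → V → Prop}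

section DirPath

variable {a b c : V} {l : List V}

lemma isDirPath_iff :
    IsDirPath G a b l ↔ List.IsChain G (a :: l) ∧ (a :: l).getLast (List.cons_ne_nil a l) = b :=
  Iff.rfl

lemma isDirPath_nil : IsDirPath G a b [] ↔ a = b := by
  simp [isDirPath_iff]

lemma isDirPath_cons {w : V} : IsDirPath G a b (w :: l) ↔ G a w ∧ IsDirPath G w b l := by
  simp only [isDirPath_iff, List.isChain_cons_cons, List.getLast_cons_cons, and_assoc]

lemma isDirPath_append {l₁ l₂ : List V} :
    IsDirPath G a c (l₁ ++ l₂) ↔ ∃ b, IsDirPath G a b l₁ ∧ IsDirPath G b c l₂ := by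
  induction l₁ generalizing a with
  | nil => simp [isDirPath_nil]
  | cons w l ih => simp only [List.cons_append, isDirPath_cons, ih, and_assoc, exists_and_left]

lemma isDirPath_getLast (h : List.IsChain G (a :: l)) :
    IsDirPath G a ((a :: l).getLast (List.cons_ne_nil a l)) l :=
  ⟨h, rfl⟩

lemma IsDirPath.reflTransGen (h : IsDirPath G a b l) : ReflTransGen G a b :=
  List.relationReflTransGen_of_exists_isChain_cons l h.1 h.2

lemma exists_isDirPath_of_reflTransGen (h : ReflTransGen G a b) : ∃ l, IsDirPath G a b l :=
  List.exists_isChain_cons_of_relationReflTransGen h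

lemma IsDirPath.eq_nil_iff_of_acyclic (hacyc : ∀ v, ¬ TransGen G v v)
    (h : IsDirPath G a b l) : l = [] ↔ a = b := by
  cases l with
  | nil => simpa [isDirPath_nil] using h
  | cons w l =>
    obtain ⟨hw, hl⟩ := isDirPath_cons.1 h
    simp only [reduceCtorEq, false_iff]
    rintro rfl
    exact hacyc a (TransGen.head' hw hl.reflTransGen)

lemma isDirPath_iff_of_getLast?_eq {p q : List V} (hp : List.IsChain G (a :: p))
    (hq : List.IsChain G (a :: q)) (h : p.getLast? = q.getLast?) :
    IsDirPath G a b p ↔ IsDirPath G a b q := by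
  simp only [isDirPath_iff, hp, hq, true_and, List.getLast_eq_getLastD,
    List.getLastD_eq_getLast?, h]

lemma exists_isDirPath_append_of_getLast?_eq {p q : List V} (hp : List.IsChain G (a :: p))
    (hq : List.IsChain G (a :: q)) (h : p.getLast? = q.getLast?)
    (hc : ∀ u, ReflTransGen G a u → ReflTransGen G u c) :
    ∃ e, IsDirPath G a c (p ++ e) ∧ IsDirPath G a c (q ++ e) := by
  have hpath := isDirPath_getLast hp
  obtain ⟨e, he⟩ := exists_isDirPath_of_reflTransGen (hc _ hpath.reflTransGen)
  exact ⟨e, isDirPath_append.2 ⟨_, hpath, he⟩,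
    isDirPath_append.2 ⟨_, (isDirPath_iff_of_getLast?_eq hp hq h).1 hpath, he⟩⟩

end DirPath

lemma ncard_reachable_lt_of_adj (hacyc : ∀ v, ¬ TransGen G v v) {v w : V}
    (hfin : {u | ReflTransGen G v u}.Finite) (hvw : G v w) :
    {u | ReflTransGen G w u}.ncard < {u | ReflTransGen G v u}.ncard :=
  Set.ncard_lt_ncard ⟨fun _ hu => hu.head hvw,
    fun hsub => hacyc v (TransGen.head' hvw (hsub ReflTransGen.refl))⟩ hfin

theorem reachable_induction (hacyc : ∀ v, ¬ TransGen G v v) {T : V}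
    (hfin : {v | ReflTransGen G T v}.Finite) {P : V → Prop}
    (step : ∀ v, ReflTransGen G T v → (∀ w, G v w → P w) → P v) :
    ∀ v, ReflTransGen G T v → P v := by
  intro v hv
  induction hn : {u | ReflTransGen G v u}.ncard using Nat.strong_induction_on generalizing v with
  | _ n ih =>
    refine step v hv fun w hw => ih _ ?_ w (hv.tail hw) rfl
    exact hn ▸ ncard_reachable_lt_of_adj hacyc (hfin.subset fun _ hu => hv.trans hu) hw

section Deformation

variable {polygon : V → List V → List V → Prop} {v w : V}

lemma elemPolyDef_of_polygon {p q : List V} (h : polygon v p q) (e : List V) :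
    ElemPolyDef polygon v (p ++ e) (q ++ e) :=
  ⟨[], p, q, e, v, rfl, rfl, rfl, h⟩

lemma ElemPolyDef.cons {P Q : List V} (h : ElemPolyDef polygon w P Q) :
    ElemPolyDef polygon v (w :: P) (w :: Q) := by
  obtain ⟨pre, mid₁, mid₂, post, u, rfl, rfl, hu, hpoly⟩ := h
  exact ⟨w :: pre, mid₁, mid₂, post, u, rfl, rfl, by rwa [List.getLast_cons_cons], hpoly⟩

lemma eqvGen_elemPolyDef_cons {P Q : List V} (h : EqvGen (ElemPolyDef polygon w) P Q) :
    EqvGen (ElemPolyDef polygon v) (w :: P) (w :: Q) := by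
  induction h with
  | rel _ _ h => exact .rel _ _ h.cons
  | refl => exact .refl _
  | symm _ _ _ ih => exact .symm _ _ ih
  | trans _ _ _ _ _ ih₁ ih₂ => exact .trans _ _ _ ih₁ ih₂

def PathsPolyEquiv (G : V → V → Prop) (polygon : V → List V → List V → Prop) (v Λ : V) :
    Prop :=
  ∀ C₁ C₂, IsDirPath G v Λ C₁ → IsDirPath G v Λ C₂ → EqvGen (ElemPolyDef polygon v) C₁ C₂

theorem PathsPolyEquiv.of_forall_adj {Λ : V} (hacyc : ∀ v, ¬ TransGen G v v)
    (hΛ : ∀ u, ReflTransGen G v u → ReflTransGen G u Λ)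
    (hside : ∀ p q, polygon v p q →
      List.IsChain G (v :: p) ∧ List.IsChain G (v :: q) ∧ p.getLast? = q.getLast?)
    (hpoly : ∀ w₁ w₂, G v w₁ → G v w₂ → w₁ ≠ w₂ →
      ∃ p q, polygon v p q ∧ p.head? = some w₁ ∧ q.head? = some w₂)
    (ih : ∀ w, G v w → PathsPolyEquiv G polygon w Λ) :
    PathsPolyEquiv G polygon v Λ := by
  unfold PathsPolyEquiv at ih ⊢
  have cons_equiv : ∀ {w D₁ D₂}, G v w → IsDirPath G w Λ D₁ → IsDirPath G w Λ D₂ →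
      EqvGen (ElemPolyDef polygon v) (w :: D₁) (w :: D₂) :=
    fun hw h₁ h₂ => eqvGen_elemPolyDef_cons (ih _ hw _ _ h₁ h₂)
  intro C₁ C₂ h₁ h₂
  by_cases hvΛ : v = Λ
  · rw [(h₁.eq_nil_iff_of_acyclic hacyc).2 hvΛ, (h₂.eq_nil_iff_of_acyclic hacyc).2 hvΛ]
    exact .refl _
  obtain ⟨w₁, C₁, rfl⟩ := List.exists_cons_of_ne_nil (mt (h₁.eq_nil_iff_of_acyclic hacyc).1 hvΛ)
  obtain ⟨w₂, C₂, rfl⟩ := List.exists_cons_of_ne_nil (mt (h₂.eq_nil_iff_of_acyclic hacyc).1 hvΛ)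
  rw [isDirPath_cons] at h₁ h₂
  by_cases hw : w₁ = w₂
  · subst hw
    exact cons_equiv h₁.1 h₁.2 h₂.2
  obtain ⟨p, q, hpq, hp, hq⟩ := hpoly w₁ w₂ h₁.1 h₂.1 hw
  obtain ⟨hpc, hqc, hlast⟩ := hside p q hpq
  obtain ⟨e, hpe, hqe⟩ := exists_isDirPath_append_of_getLast?_eq hpc hqc hlast hΛ
  obtain ⟨p, rfl⟩ := List.head?_eq_some_iff.1 hp
  obtain ⟨q, rfl⟩ := List.head?_eq_some_iff.1 hq
  rw [List.cons_append, isDirPath_cons] at hpe hqe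
  exact (cons_equiv h₁.1 h₁.2 hpe.2).trans _ _ _
    ((EqvGen.rel _ _ (elemPolyDef_of_polygon hpq e)).trans _ _ _ (cons_equiv h₂.1 hqe.2 h₂.2))

end Deformation

end

theorem paths_polygonally_equivalent_general {V : Type*} (G : V → V → Prop) (Λ T : V)
    (polygon : V → List V → List V → Prop)
    (hacyc : ∀ v, ¬ Relation.TransGen G v v)
    (hfin : {v | Relation.ReflTransGen G T v}.Finite)
    (hext : ∀ l : List V, List.Chain G T l →
      ∃ l' : List V, IsDirPath G T Λ (l ++ l'))
    (hpolyside : ∀ v p q, polygon v p q → polygon v q p ∧ p ≠ [] ∧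
      List.Chain G v p ∧ List.Chain G v q ∧ p.getLast? = q.getLast?)
    (hpolyexist : ∀ v, Relation.ReflTransGen G T v →
      ∀ w₁ w₂, G v w₁ → G v w₂ → w₁ ≠ w₂ →
        ∃ p q, polygon v p q ∧ p.head? = some w₁ ∧ q.head? = some w₂) :
    ∀ C₁ C₂ : List V, IsDirPath G T Λ C₁ → IsDirPath G T Λ C₂ →
      Relation.EqvGen (ElemPolyDef polygon T) C₁ C₂ := by
  have hΛ : ∀ u, ReflTransGen G T u → ReflTransGen G u Λ := by
    intro u hu
    obtain ⟨r, hr⟩ := exists_isDirPath_of_reflTransGen hu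
    obtain ⟨l, hl⟩ := hext r hr.1
    obtain ⟨u', hr', hl'⟩ := isDirPath_append.1 hl
    exact hr.2.symm.trans hr'.2 ▸ hl'.reflTransGen
  have hequiv : ∀ v, ReflTransGen G T v → PathsPolyEquiv G polygon v Λ :=
    reachable_induction hacyc hfin fun v hv ih =>
      .of_forall_adj hacyc (fun u hu => hΛ u (hv.trans hu))
        (fun p q h => (hpolyside v p q h).2.2) (hpolyexist v hv) ih
  exact hequiv T .refl

/-- Abstract form of the main combinatorial lemma: if `T` has only finitely many
successors, there are no directed cycles, `Λ` has no outgoing edges, every directed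
path from `T` extends to one terminating at `Λ`, the two sides of a polygon are
directed path segments with common source and target, and any two distinct outgoing
edges at a vertex reachable from `T` close up into a polygon, then any two directed
paths from `T` to `Λ` are related by the equivalence relation generated by elementary
polygonal deformations. -/
theorem paths_polygonally_equivalent {V : Type*} (G : V → V → Prop) (Λ T : V)
    (polygon : V → List V → List V → Prop)
    (hacyc : ∀ v, ¬ Relation.TransGen G v v)
    (hΛmax : ∀ w, ¬ G Λ w)
    (hfin : {v | Relation.ReflTransGen G T v}.Finite)
    (hext : ∀ l : List V, List.Chain G T l →
      ∃ l' : List V, IsDirPath G T Λ (l ++ l'))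
    (hpolyside : ∀ v p q, polygon v p q → polygon v q p ∧ p ≠ [] ∧
      List.Chain G v p ∧ List.Chain G v q ∧ p.getLast? = q.getLast?)
    (hpolyexist : ∀ v, Relation.ReflTransGen G T v →
      ∀ w₁ w₂, G v w₁ → G v w₂ → w₁ ≠ w₂ →
        ∃ p q, polygon v p q ∧ p.head? = some w₁ ∧ q.head? = some w₂) :
    ∀ C₁ C₂ : List V, IsDirPath G T Λ C₁ → IsDirPath G T Λ C₂ →
      Relation.EqvGen (ElemPolyDef polygon T) C₁ C₂ :=
  paths_polygonally_equivalent_general G Λ T polygon hacyc hfin hext hpolyside hpolyexist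
end
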